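/- arXiv:2202.03839 — 2 statements merged into one kernel-verified Lean document; each statement's English description precedes it below -/
import Mathlib

section
/- Let (α_1, …, α_r) and (β_1, …, β_m) be tuples of positive integers with r ≥ 1, m ≥ 1, α_r ≥ 2 and β_m ≥ 2. Then ζ(α_1, …, α_r) · ζ*(β_1, …, β_m) = Z_L(α_1, …, α_r; β_1, …, β_m) + Z_L(β_1, α_1, …, α_r; β_2, …, β_m). -/
open scoped BigOperators

/-- The multiple zeta value `ζ(a₁, …, a_r)`, as a sum over strictly increasing
tuples of positive integers. -/
noncomputable def mz (a : List ℕ) : ℝ :=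
  ∑' k : {k : Fin a.length → ℕ+ // StrictMono k},
    ∏ i, (1 : ℝ) / ((k.1 i : ℕ) : ℝ) ^ a.get i

/-- The multiple zeta-star value `ζ⋆(a₁, …, a_r)`, as a sum over weakly increasing
tuples of positive integers. -/
noncomputable def mzs (a : List ℕ) : ℝ :=
  ∑' k : {k : Fin a.length → ℕ+ // Monotone k},
    ∏ i, (1 : ℝ) / ((k.1 i : ℕ) : ℝ) ^ a.get i

/-- `Z_U(α; β)`: sum over `1 ≤ k₁ < ⋯ < k_r` and `1 ≤ ℓ₁ ≤ ⋯ ≤ ℓ_m ≤ k_r` of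
`k₁^{-α₁} ⋯ k_r^{-α_r} ℓ₁^{-β₁} ⋯ ℓ_m^{-β_m}` (the `ℓ`-sum is `1` when `m = 0`). -/
noncomputable def ZU (a b : List ℕ) : ℝ :=
  ∑' p : {p : (Fin a.length → ℕ+) × (Fin b.length → ℕ+) //
      StrictMono p.1 ∧ Monotone p.2 ∧
      ∀ (i : Fin a.length) (j : Fin b.length), i.1 = a.length - 1 → p.2 j ≤ p.1 i},
    (∏ i, (1 : ℝ) / ((p.1.1 i : ℕ) : ℝ) ^ a.get i) *
      ∏ j, (1 : ℝ) / ((p.1.2 j : ℕ) : ℝ) ^ b.get j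

/-- `Z_L(α; β)`: sum over `1 ≤ k₁ < ⋯ < k_r` and `k₁ ≤ ℓ₁ ≤ ⋯ ≤ ℓ_m` of
`k₁^{-α₁} ⋯ k_r^{-α_r} ℓ₁^{-β₁} ⋯ ℓ_m^{-β_m}` (the `ℓ`-sum is `1` when `m = 0`). -/
noncomputable def ZL (a b : List ℕ) : ℝ :=
  ∑' p : {p : (Fin a.length → ℕ+) × (Fin b.length → ℕ+) //
      StrictMono p.1 ∧ Monotone p.2 ∧
      ∀ (i : Fin a.length) (j : Fin b.length), i.1 = 0 → p.1 i ≤ p.2 j},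
    (∏ i, (1 : ℝ) / ((p.1.1 i : ℕ) : ℝ) ^ a.get i) *
      ∏ j, (1 : ℝ) / ((p.1.2 j : ℕ) : ℝ) ^ b.get j

/-- `Z_B(α; β)`: sum over `1 ≤ k₁ < ⋯ < k_r` and `k₁ ≤ ℓ₁ ≤ ⋯ ≤ ℓ_m ≤ k_r` of
`k₁^{-α₁} ⋯ k_r^{-α_r} ℓ₁^{-β₁} ⋯ ℓ_m^{-β_m}` (the `ℓ`-sum is `1` when `m = 0`). -/
noncomputable def ZB (a b : List ℕ) : ℝ :=
  ∑' p : {p : (Fin a.length → ℕ+) × (Fin b.length → ℕ+) //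
      StrictMono p.1 ∧ Monotone p.2 ∧
      (∀ (i : Fin a.length) (j : Fin b.length), i.1 = 0 → p.1 i ≤ p.2 j) ∧
      ∀ (i : Fin a.length) (j : Fin b.length), i.1 = a.length - 1 → p.2 j ≤ p.1 i},
    (∏ i, (1 : ℝ) / ((p.1.1 i : ℕ) : ℝ) ^ a.get i) *
      ∏ j, (1 : ℝ) / ((p.1.2 j : ℕ) : ℝ) ^ b.get j

/-!
Expanding `ζ(α) ζ⋆(β)` gives a double series over pairs `(k, ℓ)` with `k` strictly and `ℓ`
weakly increasing. The pairs with `k₁ ≤ ℓ₁` are exactly the index set of `Z_L(α; β)`. When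
`ℓ₁ < k₁`, moving `ℓ₁` to the front of `k` gives a strictly increasing tuple `(ℓ₁, k₁, …, k_r)`
with `ℓ₁ ≤ ℓ₂ ≤ ⋯`, and this is a bijection onto the index set of `Z_L(β₁, α; β₂, …, β_m)`.
Splitting the double series is legitimate because both factors converge absolutely: the terms of
`ζ⋆(c₁, …, c_{n+1})` are dominated by those of `ζ(1 + 1/(n+1))^(n+1)`.
-/

noncomputable def zetaTerm {n : ℕ} (c : Fin n → ℕ) (k : Fin n → ℕ+) : ℝ :=
  ∏ i, (1 : ℝ) / ((k i : ℕ) : ℝ) ^ c i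

lemma zetaTerm_nonneg {n : ℕ} (c : Fin n → ℕ) (k : Fin n → ℕ+) : 0 ≤ zetaTerm c k :=
  Finset.prod_nonneg fun _ _ => by positivity

lemma zetaTerm_succ {n : ℕ} (c : Fin (n + 1) → ℕ) (k : Fin (n + 1) → ℕ+) :
    zetaTerm c k = 1 / ((k 0 : ℕ) : ℝ) ^ c 0 * zetaTerm (Fin.tail c) (Fin.tail k) :=
  Fin.prod_univ_succ _

lemma Fin.monotone_cons {α : Type*} [Preorder α] {n : ℕ} {f : Fin n → α} {a : α} :
    Monotone (Fin.cons a f : Fin (n + 1) → α) ↔ (∀ j, a ≤ f j) ∧ Monotone f := by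
  simpa only [monotone_iff_forall_lt, Relator.LiftFun] using
    Fin.liftFun_cons (α := α) (· ≤ ·) (f := f) (a := a)

lemma summable_fin_prod_apply {β : Type*} {f : β → ℝ} (hf₀ : 0 ≤ f) (hf : Summable f) :
    ∀ n : ℕ, Summable fun x : Fin n → β => ∏ i, f (x i)
  | 0 => .of_finite
  | n + 1 => by
    rw [← (Fin.consEquiv fun _ => β).summable_iff]
    simpa [Function.comp_def, Fin.prod_univ_succ] using
      hf.mul_of_nonneg (summable_fin_prod_apply hf₀ hf n) hf₀ fun x =>
        Finset.prod_nonneg fun i _ => hf₀ _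

/-- Along a monotone tuple `∏ kᵢ ≤ k_last^(n+1)`, so the surplus factor `k_last` coming from
`c_last ≥ 2` is at least `(∏ kᵢ)^(1/(n+1))`. -/
lemma zetaTerm_le_prod_rpow {n : ℕ} {c : Fin (n + 1) → ℕ} (hc : ∀ i, 1 ≤ c i)
    (hlast : 2 ≤ c (Fin.last n)) {k : Fin (n + 1) → ℕ+} (hk : Monotone k) :
    zetaTerm c k ≤ ∏ i, 1 / ((k i : ℕ) : ℝ) ^ (1 + ((n + 1 : ℕ) : ℝ)⁻¹) := by
  set X : Fin (n + 1) → ℝ := fun i => ((k i : ℕ) : ℝ)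
  have hX : ∀ i, 1 ≤ X i := fun i => Nat.one_le_cast.2 (k i).pos
  have hX₀ : ∀ i, 0 ≤ X i := fun i => zero_le_one.trans (hX i)
  set P := ∏ i, X i
  have hP : 0 < P := Finset.prod_pos fun i _ => zero_lt_one.trans_le (hX i)
  have hroot : P ^ ((n + 1 : ℕ) : ℝ)⁻¹ ≤ X (Fin.last n) := by
    have : P ≤ X (Fin.last n) ^ (n + 1) := by
      calc P ≤ ∏ _i : Fin (n + 1), X (Fin.last n) :=
            Finset.prod_le_prod (fun i _ => hX₀ i) fun i _ => by
              simpa [X] using hk (Fin.le_last i)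
        _ = X (Fin.last n) ^ (n + 1) := by simp
    calc P ^ ((n + 1 : ℕ) : ℝ)⁻¹
        ≤ (X (Fin.last n) ^ (n + 1)) ^ ((n + 1 : ℕ) : ℝ)⁻¹ :=
          Real.rpow_le_rpow hP.le this (by positivity)
      _ = X (Fin.last n) := Real.pow_rpow_inv_natCast (hX₀ _) (by omega)
  have hpow : P * X (Fin.last n) ≤ ∏ i, X i ^ c i := by
    simp only [P, Fin.prod_univ_castSucc]
    rw [mul_assoc, ← pow_two]
    refine mul_le_mul (Finset.prod_le_prod (fun i _ => hX₀ _) fun i _ => ?_) ?_ (by positivity)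
      (Finset.prod_nonneg fun i _ => by have := hX₀ (Fin.castSucc i); positivity)
    · simpa using pow_le_pow_right₀ (hX _) (hc i.castSucc)
    · exact pow_le_pow_right₀ (hX _) hlast
  calc zetaTerm c k = 1 / ∏ i, X i ^ c i := by simp [zetaTerm, X]
    _ ≤ 1 / (P * P ^ ((n + 1 : ℕ) : ℝ)⁻¹) :=
        one_div_le_one_div_of_le (by positivity)
          ((mul_le_mul_of_nonneg_left hroot hP.le).trans hpow)
    _ = ∏ i, 1 / X i ^ (1 + ((n + 1 : ℕ) : ℝ)⁻¹) := by
        rw [Finset.prod_div_distrib, Real.finsetProd_rpow _ _ fun i _ => hX₀ i,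
          Real.rpow_add hP, Real.rpow_one]
        simp

lemma summable_zetaTerm_monotone {n : ℕ} {c : Fin (n + 1) → ℕ} (hc : ∀ i, 1 ≤ c i)
    (hlast : 2 ≤ c (Fin.last n)) :
    Summable fun k : {k : Fin (n + 1) → ℕ+ // Monotone k} => zetaTerm c k.1 := by
  have hζ : Summable fun j : ℕ+ => 1 / ((j : ℕ) : ℝ) ^ (1 + ((n + 1 : ℕ) : ℝ)⁻¹) :=
    (Real.summable_one_div_nat_rpow.2 (by simp; positivity)).comp_injective PNat.coe_injective
  exact ((summable_fin_prod_apply (fun j => by positivity) hζ (n + 1)).subtype _).of_nonneg_of_le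
    (fun k => zetaTerm_nonneg c k.1) fun k => zetaTerm_le_prod_rpow hc hlast k.2

lemma summable_zetaTerm_strictMono {n : ℕ} {c : Fin (n + 1) → ℕ} (hc : ∀ i, 1 ≤ c i)
    (hlast : 2 ≤ c (Fin.last n)) :
    Summable fun k : {k : Fin (n + 1) → ℕ+ // StrictMono k} => zetaTerm c k.1 := by
  have hinj : Function.Injective fun k : {k : Fin (n + 1) → ℕ+ // StrictMono k} =>
      (⟨k.1, k.2.monotone⟩ : {k : Fin (n + 1) → ℕ+ // Monotone k}) :=
    fun _ _ h => Subtype.ext (Subtype.mk.inj h)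
  exact ((summable_zetaTerm_monotone hc hlast).comp_injective hinj).congr fun _ => rfl

lemma mz_eq_of_length_eq {n : ℕ} (L : List ℕ) (h : L.length = n) :
    mz L = ∑' k : {k : Fin n → ℕ+ // StrictMono k},
      zetaTerm (fun i => L.get (i.cast h.symm)) k.1 := by
  subst h; rfl

lemma mzs_eq_of_length_eq {n : ℕ} (L : List ℕ) (h : L.length = n) :
    mzs L = ∑' k : {k : Fin n → ℕ+ // Monotone k},
      zetaTerm (fun i => L.get (i.cast h.symm)) k.1 := by
  subst h; rfl

abbrev ZLIndex (r m : ℕ) : Type :=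
  {p : (Fin r → ℕ+) × (Fin m → ℕ+) //
    StrictMono p.1 ∧ Monotone p.2 ∧ ∀ (i : Fin r) (j : Fin m), i.1 = 0 → p.1 i ≤ p.2 j}

lemma ZL_eq_of_length_eq {r m : ℕ} (L M : List ℕ) (hL : L.length = r) (hM : M.length = m) :
    ZL L M = ∑' p : ZLIndex r m,
      zetaTerm (fun i => L.get (i.cast hL.symm)) p.1.1 *
        zetaTerm (fun j => M.get (j.cast hM.symm)) p.1.2 := by
  subst hL hM; rfl

lemma mz_ofFn {n : ℕ} (c : Fin n → ℕ) :
    mz (List.ofFn c) = ∑' k : {k : Fin n → ℕ+ // StrictMono k}, zetaTerm c k.1 := by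
  simp [mz_eq_of_length_eq _ (List.length_ofFn (f := c))]

lemma mzs_ofFn {n : ℕ} (c : Fin n → ℕ) :
    mzs (List.ofFn c) = ∑' k : {k : Fin n → ℕ+ // Monotone k}, zetaTerm c k.1 := by
  simp [mzs_eq_of_length_eq _ (List.length_ofFn (f := c))]

lemma ZL_ofFn {r m : ℕ} (c : Fin r → ℕ) (d : Fin m → ℕ) :
    ZL (List.ofFn c) (List.ofFn d) = ∑' p : ZLIndex r m, zetaTerm c p.1.1 * zetaTerm d p.1.2 := by
  simp [ZL_eq_of_length_eq _ _ (List.length_ofFn (f := c)) (List.length_ofFn (f := d))]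

section Splitting

variable (r m : ℕ)

abbrev MzMulMzsIndex : Type :=
  {k : Fin (r + 1) → ℕ+ // StrictMono k} × {l : Fin (m + 1) → ℕ+ // Monotone l}

def zlIndexEquivLe :
    ZLIndex (r + 1) (m + 1) ≃ {p : MzMulMzsIndex r m // p.1.1 0 ≤ p.2.1 0} where
  toFun q := ⟨(⟨q.1.1, q.2.1⟩, ⟨q.1.2, q.2.2.1⟩), q.2.2.2 0 0 rfl⟩
  invFun p := ⟨(p.1.1.1, p.1.2.1), p.1.1.2, p.1.2.2, fun i j hi => by
    obtain rfl : i = 0 := Fin.ext hi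
    exact p.2.trans (p.1.2.2 (Fin.zero_le j))⟩
  left_inv _ := rfl
  right_inv _ := rfl

def zlIndexEquivNotLe : ZLIndex (r + 2) m ≃ {p : MzMulMzsIndex r m // ¬p.1.1 0 ≤ p.2.1 0} where
  toFun q := ⟨(⟨Fin.tail q.1.1, q.2.1.comp Fin.strictMono_succ⟩,
      ⟨Fin.cons (q.1.1 0) q.1.2, Fin.monotone_cons.2 ⟨fun j => q.2.2.2 0 j rfl, q.2.2.1⟩⟩),
    not_le.2 (q.2.1 (Fin.succ_pos 0))⟩
  invFun p := ⟨(Fin.cons (p.1.2.1 0) p.1.1.1, Fin.tail p.1.2.1),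
    Fin.strictMono_cons.2
      ⟨fun j => (not_le.1 p.2).trans_le (p.1.1.2.monotone (Fin.zero_le j)), p.1.1.2⟩,
    p.1.2.2.comp Fin.strictMono_succ.monotone,
    fun i j hi => by
      obtain rfl : i = 0 := Fin.ext hi
      exact p.1.2.2 (Fin.zero_le _)⟩
  left_inv q := Subtype.ext (Prod.ext (Fin.cons_self_tail q.1.1) rfl)
  right_inv p := Subtype.ext (Prod.ext rfl (Subtype.ext (Fin.cons_self_tail p.1.2.1)))

end Splitting

theorem tsum_mul_tsum_eq_tsum_add_tsum_ZLIndex {r m : ℕ}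
    (c : Fin (r + 1) → ℕ) (d : Fin (m + 1) → ℕ)
    (hc : Summable fun k : {k : Fin (r + 1) → ℕ+ // StrictMono k} => zetaTerm c k.1)
    (hd : Summable fun l : {l : Fin (m + 1) → ℕ+ // Monotone l} => zetaTerm d l.1) :
    (∑' k : {k : Fin (r + 1) → ℕ+ // StrictMono k}, zetaTerm c k.1) *
        ∑' l : {l : Fin (m + 1) → ℕ+ // Monotone l}, zetaTerm d l.1 =
      (∑' p : ZLIndex (r + 1) (m + 1), zetaTerm c p.1.1 * zetaTerm d p.1.2) +
        ∑' p : ZLIndex (r + 2) m,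
          zetaTerm (Fin.cons (d 0) c) p.1.1 * zetaTerm (Fin.tail d) p.1.2 := by
  have hc₀ : 0 ≤ fun k : {k : Fin (r + 1) → ℕ+ // StrictMono k} => zetaTerm c k.1 :=
    fun k => zetaTerm_nonneg c k.1
  have hd₀ : 0 ≤ fun l : {l : Fin (m + 1) → ℕ+ // Monotone l} => zetaTerm d l.1 :=
    fun l => zetaTerm_nonneg d l.1
  have hf := hc.mul_of_nonneg hd hc₀ hd₀
  rw [hc.tsum_mul_tsum hd hf, ← hf.tsum_subtype_add_tsum_subtype_compl {p | p.1.1 0 ≤ p.2.1 0}]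
  congr 1
  · exact ((zlIndexEquivLe r m).tsum_eq fun p => zetaTerm c p.1.1.1 * zetaTerm d p.1.2.1).symm
  · refine ((zlIndexEquivNotLe r m).tsum_eq fun p => zetaTerm c p.1.1.1 * zetaTerm d p.1.2.1).symm
      |>.trans (tsum_congr fun q => ?_)
    simp only [zlIndexEquivNotLe, Equiv.coe_fn_mk, zetaTerm_succ (Fin.cons _ _), zetaTerm_succ d]
    simp only [Fin.cons_zero, Fin.tail_cons]
    ring

/-- For tuples of positive integers with `r, m ≥ 1`, `α_r ≥ 2`, `β_m ≥ 2`: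
`ζ(α) ζ⋆(β) = Z_L(α₁,…,α_r; β₁,…,β_m) + Z_L(β₁,α₁,…,α_r; β₂,…,β_m)`. -/
theorem mz_mul_mzs_eq_ZL (r m : ℕ) (hr : 1 ≤ r) (hm : 1 ≤ m)
    (a : Fin r → ℕ) (b : Fin m → ℕ)
    (hapos : ∀ i, 1 ≤ a i) (hbpos : ∀ j, 1 ≤ b j)
    (har : 2 ≤ a ⟨r - 1, by omega⟩) (hbm : 2 ≤ b ⟨m - 1, by omega⟩) :
    mz (List.ofFn a) * mzs (List.ofFn b) =
      ZL (List.ofFn a) (List.ofFn b) +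
      ZL (List.ofFn (Fin.cons (b ⟨0, by omega⟩) a))
         (List.ofFn (fun j : Fin (m - 1) => b ⟨j.1 + 1, by have := j.isLt; omega⟩)) := by
  obtain ⟨r, rfl⟩ : ∃ n, r = n + 1 := ⟨r - 1, by omega⟩
  obtain ⟨m, rfl⟩ : ∃ n, m = n + 1 := ⟨m - 1, by omega⟩
  rw [mz_ofFn, mzs_ofFn, ZL_ofFn, ZL_ofFn]
  exact tsum_mul_tsum_eq_tsum_add_tsum_ZLIndex a b (summable_zetaTerm_strictMono hapos har)
    (summable_zetaTerm_monotone hbpos hbm)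
end

section
/- Let (α_1, …, α_r) be a tuple of positive integers with α_r ≥ 2 and let 1 ≤ m ≤ r − 1. Then Z_B(α_{m+1}, …, α_r; α_m, …, α_1) = (-1)^m · ζ(α_1, …, α_r) + ∑_{k=1}^{m} (-1)^{m-k} · Z_U(α_{k+1}, …, α_r; α_k, …, α_1). -/
open scoped BigOperators

/-!
Write `Z_B⁽ᵗ⁾ = Z_B(α_{t+1}, …, α_r; α_t, …, α₁)` and `Z_U⁽ᵗ⁾` likewise. Splitting the sum
defining `Z_U(α; β₁, β)` according to whether `k₁ ≤ ℓ₁` or `ℓ₁ < k₁` gives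
`Z_U(α; β₁, β) = Z_B(α; β₁, β) + Z_B(β₁, α; β)`, because in the second case `ℓ₁` becomes a new
smallest `k`-index. Hence `Z_B⁽ᵗ⁺¹⁾ + Z_B⁽ᵗ⁾ = Z_U⁽ᵗ⁺¹⁾`, and as `Z_B⁽⁰⁾ = ζ(α₁, …, α_r)` this
alternating recurrence solves to the theorem.

Splitting a series needs its convergence: since every index is at most `k_r` and `α_r ≥ 2`,
each term is dominated by the product of `x^{-(1+ε)}` over all its indices `x`, where `ε` is the
reciprocal of their number.
-/

open Finset

lemma Fin.monotone_cons_iff {α : Type*} [Preorder α] {n : ℕ} {x : α} {f : Fin n → α} :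
    Monotone (Fin.cons x f : Fin (n + 1) → α) ↔ (∀ j, x ≤ f j) ∧ Monotone f := by
  simpa only [monotone_iff_forall_lt] using! Fin.liftFun_cons (α := α) (· ≤ ·) (f := f) (a := x)

lemma forall_forall_val_eq_imp_iff {n m : ℕ} {Q : Fin n → Fin m → Prop} (i₀ : Fin n) :
    (∀ i j, i.1 = i₀.1 → Q i j) ↔ ∀ j, Q i₀ j :=
  ⟨fun h j => h i₀ j rfl, fun h _ j hi => Fin.ext hi ▸ h j⟩

lemma List.get_cons_eq_finCons {α : Type*} (c : α) (l : List α) :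
    (c :: l).get = Fin.cons c l.get := by
  funext i
  cases i using Fin.cases <;> rfl

lemma List.ofFn_add_eq_drop {α : Type*} {r m : ℕ} (f : Fin r → α) (hm : m ≤ r) :
    List.ofFn (fun i : Fin (r - m) => f ⟨m + i, by omega⟩) = (List.ofFn f).drop m := by
  apply List.ext_getElem <;> simp

lemma List.ofFn_sub_eq_reverse_take {α : Type*} {r t : ℕ} (f : Fin r → α) (ht : t ≤ r) :
    List.ofFn (fun i : Fin t => f ⟨t - 1 - i, by omega⟩) = ((List.ofFn f).take t).reverse := by
  apply List.ext_getElem <;> simp [List.getElem_reverse, min_eq_left ht]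

lemma neg_one_pow_mul_add_sum_of_add_eq {R : Type*} [CommRing R] {x u : ℕ → R} {m : ℕ}
    (h : ∀ t < m, x (t + 1) + x t = u t) :
    x m = (-1) ^ m * x 0 + ∑ k ∈ range m, (-1) ^ (m - (k + 1)) * u k := by
  induction m with
  | zero => simp
  | succ m ih =>
    have hsign : ∀ k ∈ range m, (-1 : R) ^ (m + 1 - (k + 1)) = -(-1) ^ (m - (k + 1)) := by
      intro k hk
      rw [Nat.sub_add_comm (mem_range.1 hk), pow_succ, mul_neg_one]
    rw [sum_range_succ, sum_congr rfl fun k hk => by rw [hsign k hk],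
      eq_sub_of_add_eq (h m m.lt_succ_self), ih fun t ht => h t (ht.trans m.lt_succ_self)]
    simp only [neg_mul, sum_neg_distrib, pow_succ, Nat.sub_self, pow_zero]
    ring

lemma summable_fin_pi_prod {κ : Type*} {f : κ → ℝ} (hf : Summable f) (hf0 : 0 ≤ f) (n : ℕ) :
    Summable fun u : Fin n → κ => ∏ i, f (u i) := by
  induction n with
  | zero => exact Summable.of_finite
  | succ n ih =>
    rw [← (Fin.consEquiv fun _ => κ).summable_iff]
    simpa [Function.comp_def, Fin.prod_univ_succ] using
      hf.mul_of_nonneg ih hf0 fun u => prod_nonneg fun i _ => hf0 (u i)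

lemma rpow_neg_one_add_mul_rpow {x : ℝ} (hx : 0 < x) (ε : ℝ) :
    x ^ (-(1 + ε)) * x ^ ε = x⁻¹ := by
  rw [← Real.rpow_add hx, show -(1 + ε) + ε = -1 by ring, Real.rpow_neg_one]

lemma one_div_pow_le_rpow_mul {x K ε : ℝ} {e : ℕ} (hx : 1 ≤ x) (hxK : x ≤ K) (hε : 0 ≤ ε)
    (he : 1 ≤ e) : 1 / x ^ e ≤ x ^ (-(1 + ε)) * K ^ ε := by
  have hx0 : 0 < x := by linarith
  calc 1 / x ^ e ≤ 1 / x := one_div_le_one_div_of_le hx0 (le_self_pow₀ hx (by omega))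
    _ = x ^ (-(1 + ε)) * x ^ ε := by rw [rpow_neg_one_add_mul_rpow hx0, one_div]
    _ ≤ x ^ (-(1 + ε)) * K ^ ε := by gcongr

noncomputable def zWeight {n : ℕ} (A : Fin n → ℕ) (k : Fin n → ℕ+) : ℝ :=
  ∏ i, (1 : ℝ) / ((k i : ℕ) : ℝ) ^ A i

lemma zWeight_nonneg {n : ℕ} (A : Fin n → ℕ) (k : Fin n → ℕ+) : 0 ≤ zWeight A k :=
  prod_nonneg fun _ _ => by positivity

lemma zWeight_cons {n : ℕ} (c : ℕ) (A : Fin n → ℕ) (k : Fin (n + 1) → ℕ+) :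
    zWeight (Fin.cons c A) k = 1 / ((k 0 : ℕ) : ℝ) ^ c * zWeight A (Fin.tail k) := by
  simp only [zWeight, Fin.prod_univ_succ, Fin.cons_zero, Fin.cons_succ, Fin.tail]

lemma zWeight_mul_zWeight_le {n m : ℕ} {A : Fin (n + 1) → ℕ} {B : Fin m → ℕ}
    (hA : ∀ i, 1 ≤ A i) (hB : ∀ j, 1 ≤ B j) (hlast : 2 ≤ A (Fin.last n))
    {k : Fin (n + 1) → ℕ+} {ℓ : Fin m → ℕ+} (hk : ∀ i, k i ≤ k (Fin.last n))
    (hℓ : ∀ j, ℓ j ≤ k (Fin.last n)) {ε : ℝ} (hε : (n + m + 1) * ε = 1) :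
    zWeight A k * zWeight B ℓ ≤
      (∏ i, ((k i : ℕ) : ℝ) ^ (-(1 + ε))) * ∏ j, ((ℓ j : ℕ) : ℝ) ^ (-(1 + ε)) := by
  set w : ℕ+ → ℝ := fun x => ((x : ℕ) : ℝ) ^ (-(1 + ε))
  set K : ℝ := ((k (Fin.last n) : ℕ) : ℝ)
  have hK : 1 ≤ K := Nat.one_le_cast.2 (k _).pos
  have hε0 : 0 ≤ ε := by nlinarith [(by positivity : (0 : ℝ) ≤ n + m)]
  have hsmall : ∀ (x : ℕ+) (e : ℕ), 1 ≤ e → x ≤ k (Fin.last n) →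
      1 / ((x : ℕ) : ℝ) ^ e ≤ w x * K ^ ε := fun x e he hx =>
    one_div_pow_le_rpow_mul (Nat.one_le_cast.2 x.pos) (Nat.cast_le.2 ((PNat.coe_le_coe _ _).2 hx))
      hε0 he
  have htop : 1 / K ^ A (Fin.last n) ≤ w (k (Fin.last n)) * K ^ ε / K := by
    calc 1 / K ^ A (Fin.last n) ≤ 1 / K ^ 2 :=
          one_div_le_one_div_of_le (by positivity) (pow_le_pow_right₀ hK hlast)
      _ = K ^ (-(1 + ε)) * K ^ ε / K := by
        rw [rpow_neg_one_add_mul_rpow (by positivity)]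
        field_simp
  have hpow : (K ^ ε) ^ (n + m + 1) = K := by
    rw [← Real.rpow_natCast, ← Real.rpow_mul (by positivity), Nat.cast_add_one, Nat.cast_add,
      mul_comm, hε, Real.rpow_one]
  calc zWeight A k * zWeight B ℓ
      ≤ ((∏ i : Fin n, w (k i.castSucc) * K ^ ε) * (w (k (Fin.last n)) * K ^ ε / K)) *
          ∏ j, w (ℓ j) * K ^ ε := by
        unfold zWeight
        rw [Fin.prod_univ_castSucc]
        gcongr with i _ j _
        · exact hsmall _ _ (hA _) (hk _)
        · exact hsmall _ _ (hB _) (hℓ _)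
    _ = (∏ i, w (k i)) * (∏ j, w (ℓ j)) * ((K ^ ε) ^ (n + m + 1) / K) := by
        rw [Fin.prod_univ_castSucc, prod_mul_distrib, prod_mul_distrib, prod_const, prod_const,
          card_univ, card_univ, Fintype.card_fin, Fintype.card_fin]
        ring
    _ = (∏ i, w (k i)) * ∏ j, w (ℓ j) := by
        rw [hpow, div_self (by positivity), mul_one]

section Index

variable {α : Type*} [Preorder α] {n m : ℕ}

variable (α n m) in
def zuIndex : Set ((Fin (n + 1) → α) × (Fin m → α)) :=
  {p | StrictMono p.1 ∧ Monotone p.2 ∧ ∀ j, p.2 j ≤ p.1 (Fin.last n)}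

variable (α n m) in
def zbIndex : Set ((Fin (n + 1) → α) × (Fin m → α)) :=
  {p | p ∈ zuIndex α n m ∧ ∀ j, p.1 0 ≤ p.2 j}

lemma zbIndex_subset_zuIndex : zbIndex α n m ⊆ zuIndex α n m := fun _ hp => hp.1

lemma mem_zbIndex_iff_le {p : (Fin (n + 1) → α) × (Fin (m + 1) → α)} :
    p ∈ zbIndex α n (m + 1) ↔ p ∈ zuIndex α n (m + 1) ∧ p.1 0 ≤ p.2 0 :=
  ⟨fun h => ⟨h.1, h.2 0⟩, fun h => ⟨h.1, fun j => h.2.trans (h.1.2.1 (Fin.zero_le j))⟩⟩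

end Index

theorem summable_indicator_zuIndex {n m : ℕ} {A : Fin (n + 1) → ℕ} {B : Fin m → ℕ}
    (hA : ∀ i, 1 ≤ A i) (hB : ∀ j, 1 ≤ B j) (hlast : 2 ≤ A (Fin.last n)) :
    Summable ((zuIndex ℕ+ n m).indicator fun p => zWeight A p.1 * zWeight B p.2) := by
  set ε : ℝ := 1 / (n + m + 1)
  have hε : (n + m + 1) * ε = 1 := mul_one_div_cancel (by positivity)
  set w : ℕ+ → ℝ := fun x => ((x : ℕ) : ℝ) ^ (-(1 + ε))
  have hw : Summable w :=
    (Real.summable_nat_rpow.2 (by linarith [show 0 < ε by positivity])).comp_injective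
      PNat.coe_injective
  have hw0 : 0 ≤ w := fun x => by positivity
  have hprod0 : ∀ {t : ℕ} (u : Fin t → ℕ+), 0 ≤ ∏ i, w (u i) :=
    fun u => prod_nonneg fun i _ => hw0 (u i)
  have hdom := (summable_fin_pi_prod hw hw0 (n + 1)).mul_of_nonneg (summable_fin_pi_prod hw hw0 m)
    hprod0 hprod0
  refine hdom.of_nonneg_of_le (fun p => Set.indicator_nonneg (fun p _ => ?_) p) fun p => ?_
  · exact mul_nonneg (zWeight_nonneg _ _) (zWeight_nonneg _ _)
  refine Set.indicator_apply_le' (fun hp => ?_) fun _ => mul_nonneg (hprod0 _) (hprod0 _)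
  exact zWeight_mul_zWeight_le hA hB hlast (fun i => hp.1.monotone (Fin.le_last i)) hp.2.2 hε

def shiftHeadEquiv (α : Type*) (n m : ℕ) :
    (Fin (n + 1) → α) × (Fin m → α) ≃ (Fin n → α) × (Fin (m + 1) → α) where
  toFun q := (Fin.tail q.1, Fin.cons (q.1 0) q.2)
  invFun p := (Fin.cons (p.2 0) p.1, Fin.tail p.2)
  left_inv q := by simp
  right_inv p := by simp

lemma mem_zbIndex_iff_shiftHeadEquiv_mem {α : Type*} [LinearOrder α] {n m : ℕ}
    {q : (Fin (n + 2) → α) × (Fin m → α)} :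
    q ∈ zbIndex α (n + 1) m ↔
      shiftHeadEquiv α (n + 1) m q ∈ zuIndex α n (m + 1) \ zbIndex α n (m + 1) := by
  rw [Set.mem_sdiff, mem_zbIndex_iff_le, not_and, not_le]
  obtain ⟨k, ℓ⟩ := q
  cases k using Fin.consCases with
  | cons x k =>
    simp only [zbIndex, zuIndex, Set.mem_ofPred_eq, Fin.strictMono_cons, Fin.forall_fin_succ,
      Fin.cons_last, Fin.cons_zero, shiftHeadEquiv, Equiv.coe_fn_mk, Fin.tail_cons,
      Fin.monotone_cons_iff, Fin.cons_succ]
    constructor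
    · rintro ⟨⟨⟨⟨hx, -⟩, hk⟩, hℓ, hℓk⟩, hxℓ⟩
      exact ⟨⟨hk, ⟨hxℓ, hℓ⟩, hx.le.trans (hk.monotone (Fin.zero_le _)), hℓk⟩, fun _ => hx⟩
    · rintro ⟨hu, hx⟩
      have hx := hx hu
      obtain ⟨hk, ⟨hxℓ, hℓ⟩, -, hℓk⟩ := hu
      exact ⟨⟨⟨⟨hx, fun i => hx.trans (hk (Fin.succ_pos i))⟩, hk⟩, hℓ, hℓk⟩, hxℓ⟩

lemma zWeight_shiftHeadEquiv {n m : ℕ} (c : ℕ) (A : Fin n → ℕ) (B : Fin m → ℕ)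
    (q : (Fin (n + 1) → ℕ+) × (Fin m → ℕ+)) :
    zWeight (Fin.cons c A) q.1 * zWeight B q.2 =
      zWeight A (shiftHeadEquiv ℕ+ n m q).1 *
        zWeight (Fin.cons c B) (shiftHeadEquiv ℕ+ n m q).2 := by
  simp only [shiftHeadEquiv, Equiv.coe_fn_mk, zWeight_cons, Fin.cons_zero, Fin.tail_cons]
  ring

theorem tsum_indicator_zuIndex_eq_add {n m : ℕ} {A : Fin (n + 1) → ℕ} {B : Fin m → ℕ} {c : ℕ}
    (hA : ∀ i, 1 ≤ A i) (hB : ∀ j, 1 ≤ B j) (hc : 1 ≤ c) (hlast : 2 ≤ A (Fin.last n)) :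
    ∑' p, (zuIndex ℕ+ n (m + 1)).indicator (fun p => zWeight A p.1 * zWeight (Fin.cons c B) p.2) p =
      ∑' p, (zbIndex ℕ+ n (m + 1)).indicator
          (fun p => zWeight A p.1 * zWeight (Fin.cons c B) p.2) p +
        ∑' q, (zbIndex ℕ+ (n + 1) m).indicator
          (fun q => zWeight (Fin.cons c A) q.1 * zWeight B q.2) q := by
  set F := fun p : (Fin (n + 1) → ℕ+) × (Fin (m + 1) → ℕ+) =>
    zWeight A p.1 * zWeight (Fin.cons c B) p.2
  have hsum : Summable ((zuIndex ℕ+ n (m + 1)).indicator F) :=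
    summable_indicator_zuIndex hA (Fin.cases hc hB) hlast
  have hF0 : 0 ≤ F := fun p => mul_nonneg (zWeight_nonneg _ _) (zWeight_nonneg _ _)
  have hsumB : Summable ((zbIndex ℕ+ n (m + 1)).indicator F) :=
    hsum.of_nonneg_of_le (Set.indicator_nonneg fun p _ => hF0 p)
      (Set.indicator_le_indicator_of_subset zbIndex_subset_zuIndex hF0)
  have hshift : ∀ q, (zbIndex ℕ+ (n + 1) m).indicator
      (fun q => zWeight (Fin.cons c A) q.1 * zWeight B q.2) q =
      (zuIndex ℕ+ n (m + 1) \ zbIndex ℕ+ n (m + 1)).indicator F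
        (shiftHeadEquiv ℕ+ (n + 1) m q) := by
    intro q
    by_cases hq : q ∈ zbIndex ℕ+ (n + 1) m
    · rw [Set.indicator_of_mem hq, Set.indicator_of_mem (mem_zbIndex_iff_shiftHeadEquiv_mem.1 hq)]
      exact zWeight_shiftHeadEquiv c A B q
    · rw [Set.indicator_of_notMem hq,
        Set.indicator_of_notMem (mt mem_zbIndex_iff_shiftHeadEquiv_mem.2 hq)]
  rw [tsum_congr hshift, Equiv.tsum_eq, Set.indicator_sdiff zbIndex_subset_zuIndex]
  simp only [Pi.sub_apply]
  rw [Summable.tsum_sub hsum hsumB, add_sub_cancel]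

lemma ZU_cons (x : ℕ) (a b : List ℕ) :
    ZU (x :: a) b = ∑' p, (zuIndex ℕ+ a.length b.length).indicator
      (fun p => zWeight (x :: a).get p.1 * zWeight b.get p.2) p := by
  rw [← _root_.tsum_subtype, ← (Equiv.subtypeEquivRight fun p => ?_).tsum_eq]
  · rfl
  · exact and_congr_right' (and_congr_right' (forall_forall_val_eq_imp_iff (Fin.last _)))

lemma ZB_cons (x : ℕ) (a b : List ℕ) :
    ZB (x :: a) b = ∑' p, (zbIndex ℕ+ a.length b.length).indicator
      (fun p => zWeight (x :: a).get p.1 * zWeight b.get p.2) p := by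
  rw [← _root_.tsum_subtype, ← (Equiv.subtypeEquivRight fun p => ?_).tsum_eq]
  · rfl
  · have h0 := forall_forall_val_eq_imp_iff (Q := fun i j => p.1 i ≤ p.2 j) 0
    have hl := forall_forall_val_eq_imp_iff (Q := fun i j => p.2 j ≤ p.1 i) (Fin.last a.length)
    exact ⟨fun ⟨hs, hm, h0', hl'⟩ => ⟨⟨hs, hm, hl.1 hl'⟩, h0.1 h0'⟩,
      fun ⟨⟨hs, hm, hl'⟩, h0'⟩ => ⟨hs, hm, h0.2 h0', hl.2 hl'⟩⟩

theorem ZB_nil (a : List ℕ) : ZB a [] = mz a := by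
  let e := Equiv.subtypeEquiv (Equiv.prodUnique (Fin a.length → ℕ+) (Fin 0 → ℕ+)).symm
    (p := StrictMono) (q := fun p => StrictMono p.1 ∧ Monotone p.2 ∧
      (∀ (i : Fin a.length) (j : Fin 0), i.1 = 0 → p.1 i ≤ p.2 j) ∧
      ∀ (i : Fin a.length) (j : Fin 0), i.1 = a.length - 1 → p.2 j ≤ p.1 i)
    fun k => by simp [Subsingleton.monotone]
  exact (e.tsum_eq _).symm.trans (tsum_congr fun k => by simp [e])

theorem ZU_eq_ZB_add_ZB (c : ℕ) (a d : List ℕ) (ha : a ≠ []) (hpos : ∀ y ∈ a, 1 ≤ y)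
    (hcd : ∀ y ∈ c :: d, 1 ≤ y) (hlast : 2 ≤ a.getLast ha) :
    ZU a (c :: d) = ZB a (c :: d) + ZB (c :: a) d := by
  obtain ⟨x, a, rfl⟩ := List.exists_cons_of_ne_nil ha
  rw [ZU_cons, ZB_cons, ZB_cons, List.get_cons_eq_finCons c d, List.get_cons_eq_finCons c (x :: a)]
  exact tsum_indicator_zuIndex_eq_add (fun i => hpos _ (List.get_mem _ _))
    (fun j => hcd _ (List.mem_cons_of_mem _ (List.get_mem _ _))) (hcd _ List.mem_cons_self)
    (by simpa [List.getLast_eq_getElem] using hlast)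

theorem ZB_drop_reverse_take (a : List ℕ) (hpos : ∀ y ∈ a, 1 ≤ y) (hne : a ≠ [])
    (hlast : 2 ≤ a.getLast hne) {m : ℕ} (hm : m < a.length) :
    ZB (a.drop m) (a.take m).reverse =
      (-1) ^ m * mz a +
        ∑ k ∈ range m, (-1) ^ (m - (k + 1)) * ZU (a.drop (k + 1)) (a.take (k + 1)).reverse := by
  have hstep : ∀ t < m, ZB (a.drop (t + 1)) (a.take (t + 1)).reverse +
      ZB (a.drop t) (a.take t).reverse = ZU (a.drop (t + 1)) (a.take (t + 1)).reverse := by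
    intro t ht
    have hne' : a.drop (t + 1) ≠ [] := by
      simp only [ne_eq, List.drop_eq_nil_iff, not_le]; omega
    have hpos' : ∀ y ∈ a[t] :: (a.take t).reverse, 1 ≤ y := by
      intro y hy
      simp only [List.mem_cons, List.mem_reverse] at hy
      rcases hy with rfl | hy
      exacts [hpos _ (List.getElem_mem _), hpos y (List.mem_of_mem_take hy)]
    rw [List.drop_eq_getElem_cons (by omega : t < a.length), List.take_add_one,
      List.getElem?_eq_getElem (by omega), Option.toList_some, List.reverse_append,
      List.reverse_singleton, List.singleton_append, ZU_eq_ZB_add_ZB _ _ _ hne'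
        (fun y hy => hpos y (List.mem_of_mem_drop hy)) hpos' (by rwa [List.getLast_drop])]
  simpa [ZB_nil] using neg_one_pow_mul_add_sum_of_add_eq
    (x := fun t => ZB (a.drop t) (a.take t).reverse)
    (u := fun t => ZU (a.drop (t + 1)) (a.take (t + 1)).reverse) hstep

/-- For a tuple `(α₁,…,α_r)` of positive integers with `α_r ≥ 2` and `1 ≤ m ≤ r-1`:
`Z_B(α_{m+1},…,α_r; α_m,…,α₁) = (-1)^m ζ(α₁,…,α_r) + ∑_{k=1}^m (-1)^{m-k} Z_U(α_{k+1},…,α_r; α_k,…,α₁)`. -/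
theorem ZB_eq_mz_add_sum_ZU (r m : ℕ) (a : Fin r → ℕ)
    (hpos : ∀ i, 1 ≤ a i) (hm1 : 1 ≤ m) (hmr : m ≤ r - 1)
    (har : 2 ≤ a ⟨r - 1, by omega⟩) :
    ZB (List.ofFn (fun i : Fin (r - m) => a ⟨m + i.1, by have := i.isLt; omega⟩))
       (List.ofFn (fun i : Fin m => a ⟨m - 1 - i.1, by omega⟩)) =
    (-1 : ℝ) ^ m * mz (List.ofFn a) +
      ∑ k : Fin m,
        (-1 : ℝ) ^ (m - (k.1 + 1)) *
          ZU (List.ofFn (fun i : Fin (r - (k.1 + 1)) =>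
                a ⟨k.1 + 1 + i.1, by have := i.isLt; omega⟩))
             (List.ofFn (fun i : Fin (k.1 + 1) =>
                a ⟨k.1 - i.1, by have := k.isLt; omega⟩)) := by
  have hne : List.ofFn a ≠ [] := by simp only [ne_eq, List.ofFn_eq_nil_iff]; omega
  rw [List.ofFn_add_eq_drop a (by omega), List.ofFn_sub_eq_reverse_take a (by omega),
    ZB_drop_reverse_take (List.ofFn a) (by simpa [List.mem_ofFn] using hpos) hne
      (by rwa [List.getLast_ofFn]) (by rw [List.length_ofFn]; omega), ← Fin.sum_univ_eq_sum_range]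
  congr 1
  refine sum_congr rfl fun k _ => ?_
  rw [List.ofFn_add_eq_drop a (by omega), ← List.ofFn_sub_eq_reverse_take a (by omega)]
  -- `k + 1 - 1 - i` reduces to `k - i` definitionally
  rfl
end
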